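/- arXiv:2009.13503 — 6 statements merged into one kernel-verified Lean document; each statement's English description precedes it below -/
import Mathlib

section
/- Let λ₁, λ₂, λ₄ ≥ 0 and λ₃ ≥ 1 be real numbers, let i′ be a positive integer with 2^{i′} ≥ λ₁, and let a₁, a₂, …, a_{i′+1} be non-negative real numbers such that aᵢ ≤ λ₁ for every 1 ≤ i ≤ i′+1 and aᵢ ≤ λ₂·√(a_{i+1} + 2^{i+1}·λ₃) + λ₄ for every 1 ≤ i ≤ i′. Then a₁ ≤ max{ (λ₂ + √(λ₂² + λ₄))² , λ₂·√(8·λ₃) + λ₄ }. -/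
open Real

lemma aux_sqrt4 (y : ℝ) : Real.sqrt (4 * y) = 2 * Real.sqrt y := by
  rw [show (4:ℝ) = 2^2 by norm_num, Real.sqrt_mul (by positivity), Real.sqrt_sq (by norm_num)]

lemma aux_fixed (l2 l4 : ℝ) (hl2 : 0 ≤ l2) (hl4 : 0 ≤ l4) :
    2 * l2 * Real.sqrt ((l2 + Real.sqrt (l2 ^ 2 + l4)) ^ 2) + l4
      = (l2 + Real.sqrt (l2 ^ 2 + l4)) ^ 2 := by
  have ht : 0 ≤ Real.sqrt (l2 ^ 2 + l4) := Real.sqrt_nonneg _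
  have ht2 : Real.sqrt (l2 ^ 2 + l4) ^ 2 = l2 ^ 2 + l4 := Real.sq_sqrt (by positivity)
  rw [Real.sqrt_sq (by linarith)]
  nlinarith

lemma aux_max (l2 l4 x : ℝ) (hl2 : 0 ≤ l2) (hl4 : 0 ≤ l4) (hx : 0 ≤ x) :
    2 * l2 * Real.sqrt x + l4 ≤ max ((l2 + Real.sqrt (l2 ^ 2 + l4)) ^ 2) x := by
  have ht : 0 ≤ Real.sqrt (l2 ^ 2 + l4) := Real.sqrt_nonneg _
  have ht2 : Real.sqrt (l2 ^ 2 + l4) ^ 2 = l2 ^ 2 + l4 := Real.sq_sqrt (by positivity)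
  set t := Real.sqrt (l2 ^ 2 + l4) with ht_def
  have hs : (0:ℝ) ≤ l2 + t := by linarith
  rcases le_total x ((l2 + t) ^ 2) with h | h
  · have h1 : Real.sqrt x ≤ l2 + t := by
      rw [show l2 + t = Real.sqrt ((l2 + t) ^ 2) from (Real.sqrt_sq hs).symm]
      exact Real.sqrt_le_sqrt h
    have h2 : 2 * l2 * Real.sqrt x + l4 ≤ (l2 + t) ^ 2 := by
      nlinarith [Real.sqrt_nonneg x]
    exact h2.trans (le_max_left _ _)
  · have h1 : l2 + t ≤ Real.sqrt x := by
      rw [show l2 + t = Real.sqrt ((l2 + t) ^ 2) from (Real.sqrt_sq hs).symm]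
      exact Real.sqrt_le_sqrt h
    have hux : Real.sqrt x ^ 2 = x := Real.sq_sqrt hx
    have h2 : 2 * l2 * Real.sqrt x + l4 ≤ x := by
      nlinarith [mul_nonneg (show (0:ℝ) ≤ Real.sqrt x - l2 - t by linarith)
        (show (0:ℝ) ≤ Real.sqrt x - l2 + t by linarith)]
    exact h2.trans (le_max_right _ _)

theorem recursion_lemma
    (l1 l2 l3 l4 : ℝ) (hl1 : 0 ≤ l1) (hl2 : 0 ≤ l2) (hl3 : 1 ≤ l3) (hl4 : 0 ≤ l4)
    (i' : ℕ) (hi' : 0 < i') (hpow : l1 ≤ 2 ^ i')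
    (a : ℕ → ℝ)
    (ha_nonneg : ∀ i, 1 ≤ i → i ≤ i' + 1 → 0 ≤ a i)
    (ha_le : ∀ i, 1 ≤ i → i ≤ i' + 1 → a i ≤ l1)
    (hrec : ∀ i, 1 ≤ i → i ≤ i' →
      a i ≤ l2 * Real.sqrt (a (i + 1) + 2 ^ (i + 1) * l3) + l4) :
    a 1 ≤ max ((l2 + Real.sqrt (l2 ^ 2 + l4)) ^ 2) (l2 * Real.sqrt (8 * l3) + l4) := by
  set M := (l2 + Real.sqrt (l2 ^ 2 + l4)) ^ 2 with hM_def
  have hM0 : 0 ≤ M := by positivity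
  have hl30 : (0:ℝ) ≤ l3 := by linarith
  have hMfix : 2 * l2 * Real.sqrt M + l4 = M := aux_fixed l2 l4 hl2 hl4
  -- the key induction step, usable for any 1 ≤ j ≤ i'
  have step : ∀ j, 1 ≤ j → j ≤ i' → a (j + 1) ≤ max M (2 ^ (j + 1) * l3) →
      a j ≤ max M (2 ^ j * l3) := by
    intro j hj1 hji hnext
    have hrj := hrec j hj1 hji
    rcases le_total ((2:ℝ) ^ (j + 1) * l3) M with hc | hc
    · -- a(j+1) + 2^{j+1} l3 ≤ 2M ≤ 4M
      have h1 : a (j + 1) + 2 ^ (j + 1) * l3 ≤ 4 * M := by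
        have := hnext.trans_eq (max_eq_left hc)
        linarith
      have h2 : Real.sqrt (a (j + 1) + 2 ^ (j + 1) * l3) ≤ 2 * Real.sqrt M := by
        rw [← aux_sqrt4]
        exact Real.sqrt_le_sqrt h1
      have : a j ≤ M := by nlinarith
      exact this.trans (le_max_left _ _)
    · -- a(j+1) + 2^{j+1} l3 ≤ 2^{j+2} l3 = 4 * (2^j l3)
      have h1 : a (j + 1) + 2 ^ (j + 1) * l3 ≤ 4 * (2 ^ j * l3) := by
        have h2 := hnext.trans_eq (max_eq_right hc)
        have : (2:ℝ) ^ (j+1) = 2 * 2 ^ j := by ring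
        nlinarith
      have h2 : Real.sqrt (a (j + 1) + 2 ^ (j + 1) * l3) ≤ 2 * Real.sqrt (2 ^ j * l3) := by
        rw [← aux_sqrt4]
        exact Real.sqrt_le_sqrt h1
      have h3 : a j ≤ 2 * l2 * Real.sqrt (2 ^ j * l3) + l4 := by nlinarith
      exact h3.trans (aux_max l2 l4 _ hl2 hl4 (by positivity))
  -- invariant: a j ≤ max M (2^j l3) for 2 ≤ j ≤ i'+1, by downward induction
  have key : ∀ d, d ≤ i' - 1 → a (i' + 1 - d) ≤ max M (2 ^ (i' + 1 - d) * l3) := by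
    intro d
    induction d with
    | zero =>
      intro _
      simp only [Nat.sub_zero]
      have h1 : a (i' + 1) ≤ 2 ^ (i' + 1) * l3 := by
        have h2 := ha_le (i' + 1) (by omega) le_rfl
        have h3 : (2:ℝ) ^ i' ≤ 2 ^ i' * l3 := by nlinarith [pow_pos (show (0:ℝ) < 2 by norm_num) i']
        have h4 : (2:ℝ) ^ i' * l3 ≤ 2 ^ (i' + 1) * l3 := by
          have : (2:ℝ) ^ (i'+1) = 2 * 2 ^ i' := by ring
          nlinarith [pow_pos (show (0:ℝ) < 2 by norm_num) i']
        linarith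
      exact h1.trans (le_max_right _ _)
    | succ d ih =>
      intro hd
      have hd' : d ≤ i' - 1 := by omega
      have hj : i' + 1 - (d + 1) = i' - d := by omega
      have hj2 : (i' - d) + 1 = i' + 1 - d := by omega
      rw [hj]
      have h1 : 1 ≤ i' - d := by omega
      have h2 : i' - d ≤ i' := by omega
      apply step (i' - d) h1 h2
      rw [hj2]
      exact ih hd'
  -- the invariant at j = 2
  have ha2 : a 2 ≤ max M (2 ^ 2 * l3) := by
    have := key (i' - 1) le_rfl
    have hidx : i' + 1 - (i' - 1) = 2 := by omega
    rwa [hidx] at this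
  -- final step
  have hr1 := hrec 1 le_rfl hi'
  have e : (2:ℝ) ^ (1 + 1) = 4 := by norm_num
  rw [e] at hr1
  have e2 : (2:ℝ) ^ 2 * l3 = 4 * l3 := by norm_num
  rw [e2] at ha2
  have hr1 : a 1 ≤ l2 * Real.sqrt (a 2 + 4 * l3) + l4 := hr1
  rcases le_total ((4:ℝ) * l3) M with hc | hc
  · have h1 : a 2 + 4 * l3 ≤ 4 * M := by
      have := ha2.trans_eq (max_eq_left hc)
      linarith
    have h2 : Real.sqrt (a 2 + 4 * l3) ≤ 2 * Real.sqrt M := by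
      rw [← aux_sqrt4]
      exact Real.sqrt_le_sqrt h1
    have h3 : a 1 ≤ M := by nlinarith
    exact h3.trans (le_max_left _ _)
  · have h1 : a 2 + 4 * l3 ≤ 8 * l3 := by
      have := ha2.trans_eq (max_eq_right hc)
      linarith
    have h2 : Real.sqrt (a 2 + 4 * l3) ≤ Real.sqrt (8 * l3) := Real.sqrt_le_sqrt h1
    have h3 : a 1 ≤ l2 * Real.sqrt (8 * l3) + l4 := by nlinarith
    exact h3.trans (le_max_right _ _)
end

section
/- Let ι > 0 and λ₃ ≥ 1 be real numbers, let Λ > 0, let m_max be a positive integer with 2^{m_max} ≥ Λ, and let a₁, …, a_{m_max+1} be non-negative real numbers such that a_m ≤ Λ for every 1 ≤ m ≤ m_max+1 and a_m ≤ 2√2 · √((a_{m+1} + 2^{m+1}·λ₃)·ι) + 6ι for every 1 ≤ m ≤ m_max. Then a₁ ≤ max{ 46ι , 8·√(λ₃·ι) + 6ι }. -/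
open Real

set_option maxHeartbeats 1000000

theorem recursion_lemma_instantiated
    (ι l3 Λ : ℝ) (hι : 0 < ι) (hl3 : 1 ≤ l3) (hΛ : 0 < Λ)
    (mmax : ℕ) (hmmax : 0 < mmax) (hpow : Λ ≤ 2 ^ mmax)
    (a : ℕ → ℝ)
    (ha_nonneg : ∀ m, 1 ≤ m → m ≤ mmax + 1 → 0 ≤ a m)
    (ha_le : ∀ m, 1 ≤ m → m ≤ mmax + 1 → a m ≤ Λ)
    (hrec : ∀ m, 1 ≤ m → m ≤ mmax →
      a m ≤ 2 * Real.sqrt 2 * Real.sqrt ((a (m + 1) + 2 ^ (m + 1) * l3) * ι) + 6 * ι) :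
    a 1 ≤ max (46 * ι) (8 * Real.sqrt (l3 * ι) + 6 * ι) := by
  have sqrt2_sq : Real.sqrt 2 ^ 2 = 2 := Real.sq_sqrt (by norm_num)
  have sqrt2_nonneg : (0:ℝ) ≤ Real.sqrt 2 := Real.sqrt_nonneg 2
  have sqrt2_le : Real.sqrt 2 ≤ 1.4375 := by
    rw [show (1.4375:ℝ) = Real.sqrt (1.4375^2) from (Real.sqrt_sq (by norm_num)).symm]
    exact Real.sqrt_le_sqrt (by norm_num)
  have step : ∀ n : ℕ, n + 1 ≤ mmax →
      a (n+2) ≤ max (max (46*ι) (8*Real.sqrt (2^(n+1)*l3*ι)+6*ι)) (2^(n+2)*l3) →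
      a (n+1) ≤ max (46*ι) (8*Real.sqrt (2^n*l3*ι)+6*ι) := by
    intro n hn hX
    set s := Real.sqrt (2^n*l3*ι) with hs_def
    have hs0 : 0 ≤ s := Real.sqrt_nonneg _
    have hs2 : s^2 = 2^n*l3*ι := Real.sq_sqrt (by positivity)
    have h4s : (2:ℝ)^(n+2)*l3*ι = 4*s^2 := by rw [hs2]; ring
    have hrec' : a (n+1) ≤ 2*Real.sqrt 2*Real.sqrt ((a (n+2) + 2^(n+2)*l3)*ι) + 6*ι :=
      hrec (n+1) (by omega) hn
    have harg : (a (n+2) + 2^(n+2)*l3)*ι = a (n+2)*ι + 4*s^2 := by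
      rw [← h4s]; ring
    rw [harg] at hrec'
    have key8 : a (n+2)*ι + 4*s^2 ≤ 8*s^2 → a (n+1) ≤ 8*s + 6*ι := by
      intro hy
      have h1 : Real.sqrt (a (n+2)*ι + 4*s^2) ≤ Real.sqrt (8*s^2) := Real.sqrt_le_sqrt hy
      have h2 : Real.sqrt (8*s^2) = 2*Real.sqrt 2*s := by
        rw [show (8:ℝ)*s^2 = (2*Real.sqrt 2*s)^2 by nlinarith [sqrt2_sq]]
        exact Real.sqrt_sq (by positivity)
      rw [h2] at h1
      nlinarith [sqrt2_sq, sqrt2_nonneg, hs0, h1, Real.sqrt_nonneg (a (n+2)*ι + 4*s^2), hrec']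
    have key200 : a (n+2)*ι + 4*s^2 ≤ 200*ι^2 → a (n+1) ≤ 46*ι := by
      intro hy
      have h1 : Real.sqrt (a (n+2)*ι + 4*s^2) ≤ Real.sqrt (200*ι^2) := Real.sqrt_le_sqrt hy
      have h2 : Real.sqrt (200*ι^2) = 10*Real.sqrt 2*ι := by
        rw [show (200:ℝ)*ι^2 = (10*Real.sqrt 2*ι)^2 by nlinarith [sqrt2_sq]]
        exact Real.sqrt_sq (by positivity)
      rw [h2] at h1
      nlinarith [sqrt2_sq, sqrt2_nonneg, hι.le, h1, Real.sqrt_nonneg (a (n+2)*ι + 4*s^2), hrec']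
    rcases le_max_iff.mp hX with hX1 | hX3
    · rcases le_max_iff.mp hX1 with hA | hB
      · -- a(n+2) ≤ 46ι
        have q0 : a (n+2)*ι ≤ 46*ι^2 := by nlinarith [mul_le_mul_of_nonneg_right hA hι.le]
        by_cases hc : 46*ι^2 ≤ 4*s^2
        · exact le_max_of_le_right (key8 (by linarith))
        · push_neg at hc
          exact le_max_of_le_left (key200 (by nlinarith [sq_nonneg ι]))
      · -- a(n+2) ≤ 8√(2^(n+1) l3 ι) + 6ι = 8√2 s + 6ι
        have hsplit : Real.sqrt ((2:ℝ)^(n+1)*l3*ι) = Real.sqrt 2 * s := by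
          rw [show (2:ℝ)^(n+1)*l3*ι = 2*(2^n*l3*ι) by ring, Real.sqrt_mul (by norm_num)]
        rw [hsplit] at hB
        have q1 : a (n+2)*ι ≤ 8*(Real.sqrt 2*(s*ι)) + 6*ι^2 := by
          nlinarith [mul_le_mul_of_nonneg_right hB hι.le]
        by_cases hc : s ≤ 4*ι
        · refine le_max_of_le_left (key200 ?_)
          have p1 : s*ι ≤ 4*ι^2 := by nlinarith
          have q2 : Real.sqrt 2*(s*ι) ≤ 1.4375*(4*ι^2) :=
            mul_le_mul sqrt2_le p1 (by positivity) (by norm_num)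
          have q3 : s^2 ≤ 16*ι^2 := by nlinarith
          nlinarith [sq_nonneg ι]
        · push_neg at hc
          refine le_max_of_le_right (key8 ?_)
          have p1 : s*ι ≤ s^2/4 := by nlinarith
          have q2 : Real.sqrt 2*(s*ι) ≤ 1.4375*(s^2/4) :=
            mul_le_mul sqrt2_le p1 (by positivity) (by norm_num)
          have q3 : ι^2 ≤ s^2/16 := by nlinarith
          nlinarith [sq_nonneg s]
    · -- a(n+2) ≤ 2^(n+2) l3
      refine le_max_of_le_right (key8 ?_)
      have q0 : a (n+2)*ι ≤ 2^(n+2)*l3*ι := mul_le_mul_of_nonneg_right hX3 hι.le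
      rw [h4s] at q0
      linarith
  have main : ∀ d n : ℕ, n + 1 + d = mmax →
      a (n+1) ≤ max (46*ι) (8*Real.sqrt (2^n*l3*ι)+6*ι) := by
    intro d
    induction d with
    | zero =>
      intro n hn
      apply step n (by omega)
      have h1 : a (n+2) ≤ Λ := ha_le (n+2) (by omega) (by omega)
      have h2 : Λ ≤ (2:ℝ)^(n+1) := by
        rw [← hn] at hpow; simpa using hpow
      refine le_max_of_le_right ?_
      calc a (n+2) ≤ Λ := h1
        _ ≤ (2:ℝ)^(n+1) := h2
        _ ≤ 2^(n+2)*l3 := by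
            have h2p : (2:ℝ)^(n+2) = 2*2^(n+1) := by ring
            nlinarith [pow_pos (show (0:ℝ) < 2 by norm_num) (n+1), hl3, h2p]
    | succ d ih =>
      intro n hn
      apply step n (by omega)
      exact le_max_of_le_left (ih (n+1) (by omega))
  have := main (mmax - 1) 0 (by omega)
  simpa using this
end

section
/- Let S be a positive integer, let p̂, p : Fin S → ℝ be probability vectors (nonnegative entries summing to 1), let n > 0 and ι > 0 be real numbers, and let u : Fin S → ℝ satisfy |u_i − Σⱼ pⱼ uⱼ| ≤ 1 for every i. Suppose |p̂ᵢ − pᵢ| ≤ √(2·pᵢ·ι/n) + ι/(3n) for every i. Then Σᵢ (p̂ᵢ − pᵢ)·uᵢ ≤ √(2·S·𝕍(p,u)·ι/n) + S·ι/(3n). -/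
open Real Finset

/-! Since `∑ᵢ (p̂ᵢ - pᵢ) = 0`, `u` may be replaced by its centring `vᵢ = uᵢ - ∑ⱼ pⱼ uⱼ`, which
satisfies `|vᵢ| ≤ 1` and `∑ᵢ pᵢ vᵢ² = 𝕍(p, u)`. Bounding each term by `(√(2 pᵢ ι / n) + ι / 3n) |vᵢ|`
and applying Cauchy–Schwarz to `∑ᵢ √pᵢ |vᵢ|` (over `S` terms) gives the claim. -/

/-- The variance functional `𝕍(p, v) = ∑ᵢ pᵢ vᵢ² − (∑ᵢ pᵢ vᵢ)²`. -/
noncomputable def varV {S : ℕ} (p v : Fin S → ℝ) : ℝ :=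
  (∑ i, p i * v i ^ 2) - (∑ i, p i * v i) ^ 2

section

variable {α : Type*} [Fintype α]

theorem sum_mul_sub_const_of_sum_eq_zero {q : α → ℝ} (hq : ∑ i, q i = 0) (u : α → ℝ) (c : ℝ) :
    ∑ i, q i * (u i - c) = ∑ i, q i * u i := by
  simp only [mul_sub, sum_sub_distrib, ← sum_mul, hq, zero_mul, sub_zero]

theorem sum_sqrt_mul_abs_le_sqrt_card_mul {p : α → ℝ} (hp : ∀ i, 0 ≤ p i) (v : α → ℝ) :
    ∑ i, √(p i) * |v i| ≤ √(Fintype.card α * ∑ i, p i * v i ^ 2) := by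
  apply Real.le_sqrt_of_sq_le
  calc (∑ i, √(p i) * |v i|) ^ 2 ≤ Fintype.card α * ∑ i, (√(p i) * |v i|) ^ 2 :=
        sq_sum_le_card_mul_sum_sq
    _ = Fintype.card α * ∑ i, p i * v i ^ 2 := by
        simp only [mul_pow, sq_sqrt (hp _), sq_abs]

theorem sum_mul_le_of_abs_le_sqrt_add {p q v : α → ℝ} {a b : ℝ} (hp : ∀ i, 0 ≤ p i)
    (hb : 0 ≤ b) (hq : ∀ i, |q i| ≤ √(a * p i) + b) (hv : ∀ i, |v i| ≤ 1) :
    ∑ i, q i * v i ≤ √(a * (Fintype.card α * ∑ i, p i * v i ^ 2)) + Fintype.card α * b := by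
  have hterm : ∀ i, q i * v i ≤ √a * (√(p i) * |v i|) + b := fun i =>
    calc q i * v i ≤ |q i| * |v i| := by rw [← abs_mul]; exact le_abs_self _
      _ ≤ (√a * √(p i) + b) * |v i| := by
          rw [← sqrt_mul' a (hp i)]; exact mul_le_mul_of_nonneg_right (hq i) (abs_nonneg _)
      _ ≤ √a * (√(p i) * |v i|) + b := by nlinarith [hv i]
  calc ∑ i, q i * v i ≤ ∑ i, (√a * (√(p i) * |v i|) + b) := sum_le_sum fun i _ => hterm i
    _ = √a * ∑ i, √(p i) * |v i| + Fintype.card α * b := by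
        rw [sum_add_distrib, ← mul_sum, sum_const, card_univ, nsmul_eq_mul]
    _ ≤ √(a * (Fintype.card α * ∑ i, p i * v i ^ 2)) + Fintype.card α * b := by
        have hsecond : 0 ≤ ∑ i, p i * v i ^ 2 :=
          sum_nonneg fun i _ => mul_nonneg (hp i) (sq_nonneg _)
        rw [sqrt_mul' a (by positivity)]
        gcongr
        exact sum_sqrt_mul_abs_le_sqrt_card_mul hp v

end

theorem sum_mul_sub_sum_mul_sq_eq_varV {S : ℕ} {p : Fin S → ℝ} (hp : ∑ i, p i = 1)
    (u : Fin S → ℝ) : ∑ i, p i * (u i - ∑ j, p j * u j) ^ 2 = varV p u := by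
  set m := ∑ j, p j * u j
  have hexpand : ∀ i, p i * (u i - m) ^ 2 = p i * u i ^ 2 - 2 * m * (p i * u i) + m ^ 2 * p i :=
    fun i => by ring
  simp only [hexpand, sum_add_distrib, sum_sub_distrib, ← mul_sum, hp, varV]
  ring

theorem estimated_transition_error_bound_general
    (S : ℕ) (phat p : Fin S → ℝ)
    (hphat_sum : ∑ i, phat i = 1)
    (hp_nonneg : ∀ i, 0 ≤ p i) (hp_sum : ∑ i, p i = 1)
    (n ι : ℝ) (hn : 0 < n) (hι : 0 < ι)
    (u : Fin S → ℝ) (hu : ∀ i, |u i - ∑ j, p j * u j| ≤ 1)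
    (hclose : ∀ i, |phat i - p i| ≤ Real.sqrt (2 * p i * ι / n) + ι / (3 * n)) :
    ∑ i, (phat i - p i) * u i ≤
      Real.sqrt (2 * S * varV p u * ι / n) + S * ι / (3 * n) := by
  have hsum_zero : ∑ i, (phat i - p i) = 0 := by
    rw [sum_sub_distrib, hphat_sum, hp_sum, sub_self]
  have hbound := sum_mul_le_of_abs_le_sqrt_add (a := 2 * ι / n) (b := ι / (3 * n)) hp_nonneg
    (by positivity) (fun i => (hclose i).trans_eq (by ring_nf)) hu
  rw [sum_mul_sub_const_of_sum_eq_zero hsum_zero, sum_mul_sub_sum_mul_sq_eq_varV hp_sum,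
    Fintype.card_fin] at hbound
  convert hbound using 3 <;> ring

theorem estimated_transition_error_bound
    (S : ℕ) (hS : 0 < S) (phat p : Fin S → ℝ)
    (hphat_nonneg : ∀ i, 0 ≤ phat i) (hphat_sum : ∑ i, phat i = 1)
    (hp_nonneg : ∀ i, 0 ≤ p i) (hp_sum : ∑ i, p i = 1)
    (n ι : ℝ) (hn : 0 < n) (hι : 0 < ι)
    (u : Fin S → ℝ) (hu : ∀ i, |u i - ∑ j, p j * u j| ≤ 1)
    (hclose : ∀ i, |phat i - p i| ≤ Real.sqrt (2 * p i * ι / n) + ι / (3 * n)) :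
    ∑ i, (phat i - p i) * u i ≤
      Real.sqrt (2 * S * varV p u * ι / n) + S * ι / (3 * n) :=
  estimated_transition_error_bound_general S phat p hphat_sum hp_nonneg hp_sum n ι hn hι u hu hclose
end

section
/- Let S be a positive integer, let p̂, p : Fin S → ℝ be probability vectors (nonnegative entries summing to 1), let c ≥ 0 be a real number, and let v : Fin S → ℝ with vᵢ ∈ [0,1] for all i. Suppose p̂ᵢ ≤ (3/2)·pᵢ + c for every i. Then 𝕍(p̂, v) ≤ (3/2)·𝕍(p, v) + S·c. -/
open Finset

lemma expand_sq_sum {S : ℕ} (q v : Fin S → ℝ) (hq : ∑ i, q i = 1) (μ : ℝ) :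
    ∑ i, q i * (v i - μ) ^ 2
      = (∑ i, q i * v i ^ 2) - 2 * μ * (∑ i, q i * v i) + μ ^ 2 := by
  have : ∀ i, q i * (v i - μ) ^ 2
      = q i * v i ^ 2 - 2 * μ * (q i * v i) + μ ^ 2 * q i := by
    intro i; ring
  simp only [this, Finset.sum_add_distrib, Finset.sum_sub_distrib,
    ← Finset.mul_sum, hq]
  ring

theorem empirical_variance_bound
    (S : ℕ) (hS : 0 < S) (phat p : Fin S → ℝ)
    (hphat_nonneg : ∀ i, 0 ≤ phat i) (hphat_sum : ∑ i, phat i = 1)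
    (hp_nonneg : ∀ i, 0 ≤ p i) (hp_sum : ∑ i, p i = 1)
    (c : ℝ) (hc : 0 ≤ c)
    (v : Fin S → ℝ) (hv : ∀ i, v i ∈ Set.Icc (0 : ℝ) 1)
    (hclose : ∀ i, phat i ≤ (3 / 2) * p i + c) :
    varV phat v ≤ (3 / 2) * varV p v + S * c := by
  set μ : ℝ := ∑ i, p i * v i with hμ
  -- μ ∈ [0,1]
  have hμ0 : 0 ≤ μ :=
    Finset.sum_nonneg fun i _ => mul_nonneg (hp_nonneg i) (hv i).1
  have hμ1 : μ ≤ 1 := by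
    calc μ ≤ ∑ i, p i :=
          Finset.sum_le_sum fun i _ => by
            nlinarith [(hv i).2, hp_nonneg i]
      _ = 1 := hp_sum
  -- step 1 : varV phat v ≤ ∑ phat i * (v i - μ)^2
  have h1 : varV phat v ≤ ∑ i, phat i * (v i - μ) ^ 2 := by
    rw [expand_sq_sum phat v hphat_sum μ]
    have : 0 ≤ ((∑ i, phat i * v i) - μ) ^ 2 := sq_nonneg _
    unfold varV
    nlinarith [this]
  -- step 2 : ∑ phat i * (v i - μ)^2 ≤ ∑ ((3/2) p i + c) * (v i - μ)^2
  have h2 : ∑ i, phat i * (v i - μ) ^ 2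
      ≤ ∑ i, ((3 / 2) * p i + c) * (v i - μ) ^ 2 :=
    Finset.sum_le_sum fun i _ =>
      mul_le_mul_of_nonneg_right (hclose i) (sq_nonneg _)
  -- step 3 : ∑ p i * (v i - μ)^2 = varV p v
  have h3 : ∑ i, p i * (v i - μ) ^ 2 = varV p v := by
    rw [expand_sq_sum p v hp_sum μ]
    unfold varV
    rw [← hμ]; ring
  -- step 4 : ∑ (v i - μ)^2 ≤ S
  have h4 : ∑ i, (v i - μ) ^ 2 ≤ (S : ℝ) := by
    calc ∑ i, (v i - μ) ^ 2 ≤ ∑ _i : Fin S, (1 : ℝ) :=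
          Finset.sum_le_sum fun i _ => by
            nlinarith [(hv i).1, (hv i).2]
      _ = (S : ℝ) := by simp
  have hsplit : ∑ i, ((3 / 2) * p i + c) * (v i - μ) ^ 2
      = (3 / 2) * (∑ i, p i * (v i - μ) ^ 2) + c * ∑ i, (v i - μ) ^ 2 := by
    rw [Finset.mul_sum, Finset.mul_sum, ← Finset.sum_add_distrib]
    congr 1; funext i; ring
  calc varV phat v ≤ ∑ i, ((3 / 2) * p i + c) * (v i - μ) ^ 2 := h1.trans h2
    _ = (3 / 2) * varV p v + c * ∑ i, (v i - μ) ^ 2 := by rw [hsplit, h3]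
    _ ≤ (3 / 2) * varV p v + S * c := by
        have := mul_le_mul_of_nonneg_left h4 hc
        linarith
end

section
/- Let x, K, ι be non-negative real numbers. If x ≤ 2·√(2·(x + K)·ι) + 6ι, then x ≤ 6·√(K·ι) + 21ι. -/
theorem self_bounding_inequality
    (x K ι : ℝ) (hx : 0 ≤ x) (hK : 0 ≤ K) (hι : 0 ≤ ι)
    (h : x ≤ 2 * Real.sqrt (2 * (x + K) * ι) + 6 * ι) :
    x ≤ 6 * Real.sqrt (K * ι) + 21 * ι := by
  set s := Real.sqrt (2 * (x + K) * ι) with hs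
  set t := Real.sqrt (K * ι) with ht
  have hs0 : 0 ≤ s := Real.sqrt_nonneg _
  have ht0 : 0 ≤ t := Real.sqrt_nonneg _
  have hs2 : s ^ 2 = 2 * (x + K) * ι := by
    rw [hs, Real.sq_sqrt]; positivity
  have ht2 : t ^ 2 = K * ι := by
    rw [ht, Real.sq_sqrt]; positivity
  -- key: 2*s ≤ x/2 + 4*ι + 3*t
  have key : 2 * s ≤ x / 2 + 4 * ι + 3 * t := by
    nlinarith [sq_nonneg (x / 2 - 4 * ι), mul_nonneg hx ht0, mul_nonneg hι ht0,
      sq_nonneg (2 * s - (x / 2 + 4 * ι + 3 * t))]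
  linarith
end

section
/- Let n > 0, ι > 0, and V ≥ 0 be real numbers, and let r, r̂ ∈ [0,1] be real numbers satisfying |r̂ − r| ≤ 2·√(2·r̂·ι/n) + 28·ι/(3n). Then r̂ + (460/9)·√(V·ι/n) + 2√2·√(r̂·ι/n) + (544/9)·ι/n ≥ r + max{ (20/3)·√(V·ι/n) , (400/9)·ι/n }. -/
theorem bonus_dominates_reward_error
    (n ι V : ℝ) (hn : 0 < n) (hι : 0 < ι) (hV : 0 ≤ V)
    (r rhat : ℝ) (hr : r ∈ Set.Icc (0 : ℝ) 1) (hrhat : rhat ∈ Set.Icc (0 : ℝ) 1)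
    (hclose : |rhat - r| ≤ 2 * Real.sqrt (2 * rhat * ι / n) + 28 * ι / (3 * n)) :
    r + max ((20 / 3) * Real.sqrt (V * ι / n)) ((400 / 9) * ι / n) ≤
      rhat + (460 / 9) * Real.sqrt (V * ι / n) +
        2 * Real.sqrt 2 * Real.sqrt (rhat * ι / n) + (544 / 9) * ι / n := by
  have h1 : r - rhat ≤ 2 * Real.sqrt (2 * rhat * ι / n) + 28 * ι / (3 * n) := by
    have := abs_le.mp hclose
    linarith [this.1]
  have hs : Real.sqrt (2 * rhat * ι / n) = Real.sqrt 2 * Real.sqrt (rhat * ι / n) := by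
    rw [show 2 * rhat * ι / n = 2 * (rhat * ι / n) by ring,
      Real.sqrt_mul (by norm_num)]
  have ha : 0 ≤ (20 / 3) * Real.sqrt (V * ι / n) := by positivity
  have hb : 0 ≤ (400 / 9) * ι / n := by positivity
  have hmax : max ((20 / 3) * Real.sqrt (V * ι / n)) ((400 / 9) * ι / n) ≤
      (20 / 3) * Real.sqrt (V * ι / n) + (400 / 9) * ι / n := by
    rcases max_cases ((20 / 3) * Real.sqrt (V * ι / n)) ((400 / 9) * ι / n) with ⟨h, _⟩ | ⟨h, _⟩ <;>
      linarith
  have hin : 0 < ι / n := by positivity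
  have hsV : 0 ≤ Real.sqrt (V * ι / n) := Real.sqrt_nonneg _
  rw [hs] at h1
  have e1 : 28 * ι / (3 * n) = (28 / 3) * (ι / n) := by field_simp
  have e2 : 400 / 9 * ι / n = (400 / 9) * (ι / n) := by ring
  have e3 : 544 / 9 * ι / n = (544 / 9) * (ι / n) := by ring
  rw [e1] at h1
  rw [e2, e3]
  rw [e2] at hmax hb
  linarith [hmax]
end
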